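/- arXiv:1907.00459 — 2 statements merged into one kernel-verified Lean document; each statement's English description precedes it below -/
import Mathlib

section
/- Let S ∈ ℝ^{n×n} and F ∈ ℝ^{m×m} be symmetric real matrices and B ∈ ℝ^{n×m}, and suppose R = F + BᵀSB is invertible. Define G = I_n − B R⁻¹ Bᵀ S. Then Gᵀ S G + S B R⁻¹ F R⁻¹ Bᵀ S = Gᵀ S. -/
open Matrix

theorem stmt_7 {n m : ℕ}
    (S : Matrix (Fin n) (Fin n) ℝ) (F : Matrix (Fin m) (Fin m) ℝ)
    (B : Matrix (Fin n) (Fin m) ℝ)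
    (hS : S.IsSymm) (hF : F.IsSymm)
    (R : Matrix (Fin m) (Fin m) ℝ) (hR : R = F + Bᵀ * S * B)
    (hRinv : IsUnit R.det)
    (G : Matrix (Fin n) (Fin n) ℝ)
    (hG : G = (1 : Matrix (Fin n) (Fin n) ℝ) - B * R⁻¹ * Bᵀ * S) :
    Gᵀ * S * G + S * B * R⁻¹ * F * R⁻¹ * Bᵀ * S = Gᵀ * S := by
  have hRsymm : Rᵀ = R := by
    rw [hR]
    simp [transpose_add, transpose_mul, hF.eq, hS.eq, Matrix.mul_assoc]
  have hinv : (R⁻¹)ᵀ = R⁻¹ := by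
    rw [Matrix.transpose_nonsing_inv, hRsymm]
  have hGT : Gᵀ = 1 - S * B * R⁻¹ * Bᵀ := by
    rw [hG]
    simp [transpose_sub, transpose_mul, hinv, hS.eq, Matrix.mul_assoc]
  have hBSB : Bᵀ * (S * B) = R - F := by
    rw [hR]; rw [← Matrix.mul_assoc]; abel
  have hRR : R⁻¹ * R = 1 := Matrix.nonsing_inv_mul R hRinv
  have key : Gᵀ * (S * B) * R⁻¹ = S * B * R⁻¹ * F * R⁻¹ := by
    rw [hGT, Matrix.sub_mul, Matrix.sub_mul, Matrix.one_mul]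
    have h2 : S * B * R⁻¹ * Bᵀ * (S * B) = S * B * R⁻¹ * (R - F) := by
      rw [Matrix.mul_assoc (S * B * R⁻¹), hBSB]
    rw [h2, Matrix.mul_sub, Matrix.mul_assoc (S * B), hRR, Matrix.mul_one,
      Matrix.sub_mul]
    abel
  have key2 : Gᵀ * S * (B * R⁻¹ * Bᵀ * S) = S * B * R⁻¹ * F * R⁻¹ * Bᵀ * S := by
    have := congrArg (fun X => X * (Bᵀ * S)) key
    simpa [Matrix.mul_assoc] using this
  have hexp : Gᵀ * S * G = Gᵀ * S * (1 - B * R⁻¹ * Bᵀ * S) := by rw [← hG]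
  rw [hexp, Matrix.mul_sub, Matrix.mul_one, key2]
  abel
end

section
/- Consider the one-stage Bayesian linear-quadratic game: given a state x ∈ ℝ^n, each player i = 1,…,N of each type θ_i ∈ Θ_i simultaneously chooses u_i(θ_i) ∈ ℝ^{m_i} to minimize J_i(u_i(θ_i); u_{−i}, θ_i) = E_{θ_{−i}∼ℓ_i} [ ∑_{j=1}^N u_j(θ_j)ᵀ F_{ij}(θ_i) u_j(θ_j) + N_i(θ_i)ᵀ y(θ) + y(θ)ᵀ S_i(θ_i) y(θ) ], where y(θ) = A(θ) x + ∑_{j=1}^N B_j(θ_j) u_j(θ_j). Suppose R_i(θ_i) = F_{ii}(θ_i) + B_i(θ_i)ᵀ S_i(θ_i) B_i(θ_i) is symmetric positive definite for every i and θ_i. Then a profile {u_i(θ_i)} is a Bayesian Nash equilibrium if and only if for every i and θ_i it satisfies the first-order condition −R_i(θ_i) u_i(θ_i) = B_i(θ_i)ᵀ S_i(θ_i) E_{θ_{−i}∼ℓ_i}[A(θ_i,θ_{−i})] x + (1/2) B_i(θ_i)ᵀ N_i(θ_i) + B_i(θ_i)ᵀ S_i(θ_i) ∑_{j≠i} E_{θ_j∼ℓ_i}[B_j(θ_j)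 u_j(θ_j)], equivalently the stacked vector 𝐮 of all u_i(θ_i) solves the linear system W^0 𝐮 = −(W^1 x + W^2). If in addition W^0 is nonsingular, the equilibrium exists, is unique, and is affine in the state: 𝐮 = (−W^0)⁻¹ (W^1 x + W^2). -/
open Matrix

/-- Index of the stacked action vector: a pair of a player `i`, one of his types
`θ_i ∈ Θ_i`, and a coordinate of his action space `ℝ^{m i}`. -/
abbrev StackIdx (N : ℕ) (m : Fin N → ℕ) (Θ : Fin N → Type*) : Type _ :=
  Σ i : Fin N, Θ i × Fin (m i)

section OneStage

variable {N n : ℕ} {m : Fin N → ℕ} {Θ : Fin N → Type*}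
  [∀ i, Fintype (Θ i)] [∀ i, DecidableEq (Θ i)]

variable (A : (∀ j, Θ j) → Matrix (Fin n) (Fin n) ℝ)
  (B : ∀ j : Fin N, Θ j → Matrix (Fin n) (Fin (m j)) ℝ)
  (S : ∀ i : Fin N, Θ i → Matrix (Fin n) (Fin n) ℝ)
  (F : ∀ i j : Fin N, Θ i → Matrix (Fin (m j)) (Fin (m j)) ℝ)
  (Nv : ∀ i : Fin N, Θ i → Fin n → ℝ)
  (bel : ∀ i : Fin N, Θ i → (∀ j, Θ j) → ℝ)
  (x : Fin n → ℝ)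

/-- Next state `y(θ) = A(θ) x + ∑_j B_j(θ_j) u_j(θ_j)`. -/
noncomputable def nextSt (u : ∀ j : Fin N, Θ j → Fin (m j) → ℝ)
    (θ : ∀ j, Θ j) : Fin n → ℝ :=
  A θ *ᵥ x + ∑ j, B j (θ j) *ᵥ u j (θ j)

/-- Expected cost of player `i` of type `θi` under the type-dependent action
profile `u`. -/
noncomputable def oneCost (i : Fin N) (θi : Θ i)
    (u : ∀ j : Fin N, Θ j → Fin (m j) → ℝ) : ℝ :=
  ∑ θ : ∀ j, Θ j, bel i θi θ *
    ((∑ j, u j (θ j) ⬝ᵥ (F i j θi *ᵥ u j (θ j))) +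
      Nv i θi ⬝ᵥ nextSt A B x u θ +
      nextSt A B x u θ ⬝ᵥ (S i θi *ᵥ nextSt A B x u θ))

/-- Bayesian Nash equilibrium: no player of any type can strictly decrease his
expected cost by unilaterally changing his own action. -/
def IsBNE (u : ∀ j : Fin N, Θ j → Fin (m j) → ℝ) : Prop :=
  ∀ (i : Fin N) (θi : Θ i) (v : Fin (m i) → ℝ),
    oneCost A B S F Nv bel x i θi u ≤
      oneCost A B S F Nv bel x i θi (Function.update u i (Function.update (u i) θi v))

/-- The stacked block matrix `W⁰`. -/
noncomputable def W0mat : Matrix (StackIdx N m Θ) (StackIdx N m Θ) ℝ := fun p q =>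
  if h : p.1 = q.1 then
    if cast (congrArg Θ h) p.2.1 = q.2.1 then
      (F q.1 q.1 q.2.1 + (B q.1 q.2.1)ᵀ * S q.1 q.2.1 * B q.1 q.2.1)
        (Fin.cast (congrArg m h) p.2.2) q.2.2
    else 0
  else
    (∑ θ : ∀ j, Θ j, if θ q.1 = q.2.1 then bel p.1 p.2.1 θ else 0) *
      (((B p.1 p.2.1)ᵀ * S p.1 p.2.1 * B q.1 q.2.1) p.2.2 q.2.2)

/-- The stacked matrix `W¹` whose `(i,θ_i)`-block is
`B_i(θ_i)ᵀ S_i(θ_i) E_{θ_{-i}∼ℓ_i}[A(θ_i, θ_{-i})]`. -/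
noncomputable def W1mat : Matrix (StackIdx N m Θ) (Fin n) ℝ := fun p col =>
  ((B p.1 p.2.1)ᵀ * S p.1 p.2.1 * ∑ θ : ∀ j, Θ j, bel p.1 p.2.1 θ • A θ) p.2.2 col

/-- The stacked vector `W²` whose `(i,θ_i)`-block is `(1/2) B_i(θ_i)ᵀ N_i(θ_i)`. -/
noncomputable def W2vec : StackIdx N m Θ → ℝ := fun p =>
  (1 / 2) * (((B p.1 p.2.1)ᵀ *ᵥ Nv p.1 p.2.1) p.2.2)

/-- First-order condition of player `i` of type `θi`. -/
def FOC (u : ∀ j : Fin N, Θ j → Fin (m j) → ℝ) (i : Fin N) (θi : Θ i) : Prop :=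
  -((F i i θi + (B i θi)ᵀ * S i θi * B i θi) *ᵥ u i θi) =
    (B i θi)ᵀ *ᵥ (S i θi *ᵥ ((∑ θ : ∀ j, Θ j, bel i θi θ • A θ) *ᵥ x)) +
      (1 / 2 : ℝ) • ((B i θi)ᵀ *ᵥ Nv i θi) +
      (B i θi)ᵀ *ᵥ (S i θi *ᵥ
        ∑ j ∈ Finset.univ.erase i, ∑ θ : ∀ j', Θ j',
          bel i θi θ • (B j (θ j) *ᵥ u j (θ j)))

/-- The action profile stacked as a vector over `StackIdx`. -/
def stack (u : ∀ j : Fin N, Θ j → Fin (m j) → ℝ) : StackIdx N m Θ → ℝ :=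
  fun q => u q.1 q.2.1 q.2.2

end OneStage


section Helpers

lemma dot_symm_mulVec {n : ℕ} (S : Matrix (Fin n) (Fin n) ℝ) (hS : S.IsSymm)
    (a b : Fin n → ℝ) : a ⬝ᵥ (S *ᵥ b) = b ⬝ᵥ (S *ᵥ a) := by
  rw [Matrix.dotProduct_mulVec, show a ᵥ* S = S *ᵥ a from by
    rw [← hS.eq, Matrix.vecMul_transpose, hS.eq], dotProduct_comm]

lemma dot_transpose_mulVec {n k : ℕ} (B : Matrix (Fin n) (Fin k) ℝ)
    (v : Fin k → ℝ) (w : Fin n → ℝ) : v ⬝ᵥ (Bᵀ *ᵥ w) = (B *ᵥ v) ⬝ᵥ w := by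
  rw [Matrix.dotProduct_mulVec, Matrix.vecMul_transpose]

lemma quad_min {k : ℕ} {R : Matrix (Fin k) (Fin k) ℝ} (hR : R.PosDef) (L w : Fin k → ℝ) :
    (∀ v, w ⬝ᵥ (R *ᵥ w) + L ⬝ᵥ w ≤ v ⬝ᵥ (R *ᵥ v) + L ⬝ᵥ v) ↔
      (2:ℝ) • (R *ᵥ w) + L = 0 := by
  have hsym : R.IsSymm := hR.1
  have hposd : ∀ d : Fin k → ℝ, d ≠ 0 → 0 < d ⬝ᵥ (R *ᵥ d) := by
    intro d hd
    have := hR.dotProduct_mulVec_pos hd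
    simpa using this
  have key : ∀ d : Fin k → ℝ, (w + d) ⬝ᵥ (R *ᵥ (w + d)) + L ⬝ᵥ (w + d)
      = (w ⬝ᵥ (R *ᵥ w) + L ⬝ᵥ w) + (d ⬝ᵥ (R *ᵥ d) + ((2:ℝ) • (R *ᵥ w) + L) ⬝ᵥ d) := by
    intro d
    have h1 := dot_symm_mulVec R hsym w d
    simp only [Matrix.mulVec_add, dotProduct_add, add_dotProduct,
      smul_dotProduct, Matrix.smul_mulVec, smul_eq_mul]
    linarith [h1, dotProduct_comm (R *ᵥ w) d]
  constructor
  · intro hmin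
    have hc : ∀ d : Fin k → ℝ, ((2:ℝ) • (R *ᵥ w) + L) ⬝ᵥ d = 0 := by
      intro d
      by_cases hd : d = 0
      · simp [hd]
      · have ha : 0 < d ⬝ᵥ (R *ᵥ d) := hposd d hd
        have h2 : ∀ t : ℝ, 0 ≤ (d ⬝ᵥ (R *ᵥ d)) * (t*t) + (((2:ℝ) • (R *ᵥ w) + L) ⬝ᵥ d) * t + 0 := by
          intro t
          have h3 := hmin (w + t • d)
          rw [key (t • d)] at h3
          have he : (t • d) ⬝ᵥ (R *ᵥ (t • d)) = (d ⬝ᵥ (R *ᵥ d)) * (t*t) := by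
            simp [smul_dotProduct, Matrix.mulVec_smul, dotProduct_smul,
              smul_eq_mul]
            ring
          have he2 : ((2:ℝ) • (R *ᵥ w) + L) ⬝ᵥ (t • d)
              = (((2:ℝ) • (R *ᵥ w) + L) ⬝ᵥ d) * t := by
            rw [dotProduct_smul, smul_eq_mul]; ring
          rw [he, he2] at h3
          linarith
        have hdis := discrim_le_zero h2
        rw [discrim] at hdis
        have : (((2:ℝ) • (R *ᵥ w) + L) ⬝ᵥ d)^2 = 0 := by
          nlinarith [sq_nonneg (((2:ℝ) • (R *ᵥ w) + L) ⬝ᵥ d)]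
        exact pow_eq_zero_iff (by norm_num) |>.mp this
    have := hc ((2:ℝ) • (R *ᵥ w) + L)
    exact (dotProduct_self_eq_zero).mp this
  · intro h0 v
    have hk := key (v - w)
    rw [add_sub_cancel] at hk
    rw [hk, h0]
    have hpos : 0 ≤ (v - w) ⬝ᵥ (R *ᵥ (v - w)) := by
      by_cases hd : v - w = 0
      · simp [hd]
      · exact (hposd _ hd).le
    simp only [zero_dotProduct]
    linarith

end Helpers

section Aux

variable {N n : ℕ} {m : Fin N → ℕ} {Θ : Fin N → Type*}
  [∀ i, Fintype (Θ i)] [∀ i, DecidableEq (Θ i)]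

variable (A : (∀ j, Θ j) → Matrix (Fin n) (Fin n) ℝ)
  (B : ∀ j : Fin N, Θ j → Matrix (Fin n) (Fin (m j)) ℝ)
  (S : ∀ i : Fin N, Θ i → Matrix (Fin n) (Fin n) ℝ)
  (F : ∀ i j : Fin N, Θ i → Matrix (Fin (m j)) (Fin (m j)) ℝ)
  (Nv : ∀ i : Fin N, Θ i → Fin n → ℝ)
  (bel : ∀ i : Fin N, Θ i → (∀ j, Θ j) → ℝ)
  (x : Fin n → ℝ)

/-- The part of the next state not depending on player `i`'s action. -/
noncomputable def aTh (u : ∀ j : Fin N, Θ j → Fin (m j) → ℝ) (i : Fin N)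
    (θ : ∀ j, Θ j) : Fin n → ℝ :=
  A θ *ᵥ x + ∑ j ∈ Finset.univ.erase i, B j (θ j) *ᵥ u j (θ j)

/-- Expected value of `aTh`. -/
noncomputable def abarV (u : ∀ j : Fin N, Θ j → Fin (m j) → ℝ) (i : Fin N)
    (θi : Θ i) : Fin n → ℝ :=
  (∑ θ : ∀ j, Θ j, bel i θi θ • A θ) *ᵥ x +
    ∑ j ∈ Finset.univ.erase i, ∑ θ : ∀ j', Θ j', bel i θi θ • (B j (θ j) *ᵥ u j (θ j))

lemma sum_mulVec' {α : Type*} {n k : ℕ} (s : Finset α) (M : α → Matrix (Fin n) (Fin k) ℝ)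
    (x : Fin k → ℝ) : (∑ a ∈ s, M a) *ᵥ x = ∑ a ∈ s, M a *ᵥ x := by
  ext i
  simp only [Matrix.mulVec, dotProduct, Matrix.sum_apply, Finset.sum_mul, Finset.sum_apply]
  rw [Finset.sum_comm]

lemma mulVec_sum' {α : Type*} {n k : ℕ} (s : Finset α) (A : Matrix (Fin n) (Fin k) ℝ)
    (v : α → Fin k → ℝ) : A *ᵥ (∑ a ∈ s, v a) = ∑ a ∈ s, A *ᵥ v a := by
  simp only [← Matrix.mulVecLin_apply, map_sum]

set_option linter.unusedSectionVars false

lemma sum_dotProduct' {α : Type*} {k : ℕ} (s : Finset α) (f : α → Fin k → ℝ)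
    (v : Fin k → ℝ) : (∑ a ∈ s, f a) ⬝ᵥ v = ∑ a ∈ s, f a ⬝ᵥ v := by
  simp only [dotProduct, Finset.sum_apply, Finset.sum_mul]
  rw [Finset.sum_comm]

lemma abar_eq (u : ∀ j : Fin N, Θ j → Fin (m j) → ℝ) (i : Fin N) (θi : Θ i) :
    ∑ θ : ∀ j, Θ j, bel i θi θ • aTh A B x u i θ = abarV A B bel x u i θi := by
  unfold aTh abarV
  simp only [smul_add]
  rw [Finset.sum_add_distrib]
  congr 1
  · rw [sum_mulVec']
    exact Finset.sum_congr rfl fun θ _ => by rw [Matrix.smul_mulVec]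
  · rw [Finset.sum_comm]
    exact Finset.sum_congr rfl fun θ _ => by rw [Finset.smul_sum]

lemma per_theta (i : Fin N) (θi : Θ i) (hS : (S i θi).IsSymm)
    (u : ∀ j : Fin N, Θ j → Fin (m j) → ℝ) (v : Fin (m i) → ℝ)
    (θ : ∀ j, Θ j) (hθ : θ i = θi) :
    (∑ j, (Function.update u i (Function.update (u i) θi v)) j (θ j) ⬝ᵥ
        (F i j θi *ᵥ (Function.update u i (Function.update (u i) θi v)) j (θ j))) +
      Nv i θi ⬝ᵥ nextSt A B x (Function.update u i (Function.update (u i) θi v)) θ +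
      nextSt A B x (Function.update u i (Function.update (u i) θi v)) θ ⬝ᵥ
        (S i θi *ᵥ nextSt A B x (Function.update u i (Function.update (u i) θi v)) θ)
    = v ⬝ᵥ ((F i i θi + (B i θi)ᵀ * S i θi * B i θi) *ᵥ v) +
      ((B i θi)ᵀ *ᵥ Nv i θi + (2:ℝ) • ((B i θi)ᵀ *ᵥ (S i θi *ᵥ aTh A B x u i θ))) ⬝ᵥ v +
      ((∑ j ∈ Finset.univ.erase i, u j (θ j) ⬝ᵥ (F i j θi *ᵥ u j (θ j))) +
        Nv i θi ⬝ᵥ aTh A B x u i θ +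
        aTh A B x u i θ ⬝ᵥ (S i θi *ᵥ aTh A B x u i θ)) := by
  subst hθ
  set u' := Function.update u i (Function.update (u i) (θ i) v) with hu'
  have hui : u' i (θ i) = v := by simp [hu']
  have huj : ∀ j, j ≠ i → u' j = u j := by
    intro j hj; simp [hu', Function.update_of_ne hj]
  have hFsum : (∑ j, u' j (θ j) ⬝ᵥ (F i j (θ i) *ᵥ u' j (θ j)))
      = v ⬝ᵥ (F i i (θ i) *ᵥ v) +
        ∑ j ∈ Finset.univ.erase i, u j (θ j) ⬝ᵥ (F i j (θ i) *ᵥ u j (θ j)) := by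
    rw [← Finset.add_sum_erase _ _ (Finset.mem_univ i), hui]
    congr 1
    exact Finset.sum_congr rfl fun j hj => by rw [huj j (Finset.ne_of_mem_erase hj)]
  have hy : nextSt A B x u' θ = aTh A B x u i θ + B i (θ i) *ᵥ v := by
    unfold nextSt aTh
    rw [← Finset.add_sum_erase _ (fun j => B j (θ j) *ᵥ u' j (θ j)) (Finset.mem_univ i), hui,
      show (∑ j ∈ Finset.univ.erase i, B j (θ j) *ᵥ u' j (θ j))
          = ∑ j ∈ Finset.univ.erase i, B j (θ j) *ᵥ u j (θ j) from
        Finset.sum_congr rfl fun j hj => by rw [huj j (Finset.ne_of_mem_erase hj)]]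
    abel
  rw [hFsum, hy]
  have hcross := dot_symm_mulVec (S i (θ i)) hS (aTh A B x u i θ) (B i (θ i) *ᵥ v)
  have ht1 := dot_transpose_mulVec (B i (θ i)) v (Nv i (θ i))
  have ht2 := dot_transpose_mulVec (B i (θ i)) v (S i (θ i) *ᵥ aTh A B x u i θ)
  have ht3 := dot_transpose_mulVec (B i (θ i)) v (S i (θ i) *ᵥ (B i (θ i) *ᵥ v))
  have hd1 := dotProduct_comm (B i (θ i) *ᵥ v) (Nv i (θ i))
  have hd2 := dotProduct_comm (B i (θ i) *ᵥ v) (S i (θ i) *ᵥ aTh A B x u i θ)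
  have hd3 := dotProduct_comm ((B i (θ i))ᵀ *ᵥ Nv i (θ i)) v
  have hd4 := dotProduct_comm ((B i (θ i))ᵀ *ᵥ (S i (θ i) *ᵥ aTh A B x u i θ)) v
  simp only [Matrix.add_mulVec, dotProduct_add, add_dotProduct,
    Matrix.mulVec_add, smul_dotProduct, smul_eq_mul,
    ← Matrix.mulVec_mulVec] at *
  linarith

lemma cost_expand (i : Fin N) (θi : Θ i) (hS : (S i θi).IsSymm)
    (hbelsum : ∑ θ : ∀ j, Θ j, bel i θi θ = 1)
    (hbelsupp : ∀ θ, bel i θi θ ≠ 0 → θ i = θi)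
    (u : ∀ j : Fin N, Θ j → Fin (m j) → ℝ) (v : Fin (m i) → ℝ) :
    oneCost A B S F Nv bel x i θi (Function.update u i (Function.update (u i) θi v))
    = v ⬝ᵥ ((F i i θi + (B i θi)ᵀ * S i θi * B i θi) *ᵥ v) +
      ((B i θi)ᵀ *ᵥ Nv i θi +
        (2:ℝ) • ((B i θi)ᵀ *ᵥ (S i θi *ᵥ abarV A B bel x u i θi))) ⬝ᵥ v +
      ∑ θ : ∀ j, Θ j, bel i θi θ *
        ((∑ j ∈ Finset.univ.erase i, u j (θ j) ⬝ᵥ (F i j θi *ᵥ u j (θ j))) +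
          Nv i θi ⬝ᵥ aTh A B x u i θ +
          aTh A B x u i θ ⬝ᵥ (S i θi *ᵥ aTh A B x u i θ)) := by
  unfold oneCost
  have hper : ∀ θ : ∀ j, Θ j,
      bel i θi θ *
        ((∑ j, (Function.update u i (Function.update (u i) θi v)) j (θ j) ⬝ᵥ
            (F i j θi *ᵥ (Function.update u i (Function.update (u i) θi v)) j (θ j))) +
          Nv i θi ⬝ᵥ nextSt A B x (Function.update u i (Function.update (u i) θi v)) θ +
          nextSt A B x (Function.update u i (Function.update (u i) θi v)) θ ⬝ᵥ
            (S i θi *ᵥ nextSt A B x (Function.update u i (Function.update (u i) θi v)) θ))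
      = bel i θi θ * (v ⬝ᵥ ((F i i θi + (B i θi)ᵀ * S i θi * B i θi) *ᵥ v)) +
        ((bel i θi θ • ((B i θi)ᵀ *ᵥ Nv i θi +
          (2:ℝ) • ((B i θi)ᵀ *ᵥ (S i θi *ᵥ aTh A B x u i θ)))) ⬝ᵥ v +
        bel i θi θ *
          ((∑ j ∈ Finset.univ.erase i, u j (θ j) ⬝ᵥ (F i j θi *ᵥ u j (θ j))) +
            Nv i θi ⬝ᵥ aTh A B x u i θ +
            aTh A B x u i θ ⬝ᵥ (S i θi *ᵥ aTh A B x u i θ))) := by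
    intro θ
    by_cases h : bel i θi θ = 0
    · simp [h]
    · rw [per_theta A B S F Nv x i θi hS u v θ (hbelsupp θ h),
        smul_dotProduct, smul_eq_mul]
      ring
  rw [Finset.sum_congr rfl fun θ _ => hper θ, Finset.sum_add_distrib,
    Finset.sum_add_distrib, ← Finset.sum_mul, hbelsum, one_mul,
    ← sum_dotProduct']
  have hL : (∑ θ : ∀ j, Θ j, bel i θi θ • ((B i θi)ᵀ *ᵥ Nv i θi +
      (2:ℝ) • ((B i θi)ᵀ *ᵥ (S i θi *ᵥ aTh A B x u i θ))))
      = (B i θi)ᵀ *ᵥ Nv i θi +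
        (2:ℝ) • ((B i θi)ᵀ *ᵥ (S i θi *ᵥ abarV A B bel x u i θi)) := by
    simp only [smul_add]
    rw [Finset.sum_add_distrib, ← Finset.sum_smul, hbelsum, one_smul]
    congr 1
    have h1 : ∀ θ : ∀ j, Θ j, bel i θi θ • ((2:ℝ) • ((B i θi)ᵀ *ᵥ (S i θi *ᵥ aTh A B x u i θ)))
        = (2:ℝ) • ((B i θi)ᵀ *ᵥ (S i θi *ᵥ (bel i θi θ • aTh A B x u i θ))) := by
      intro θ
      rw [smul_comm, Matrix.mulVec_smul, Matrix.mulVec_smul]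
    rw [Finset.sum_congr rfl fun θ _ => h1 θ, ← Finset.smul_sum]
    congr 1
    rw [← mulVec_sum', ← mulVec_sum', abar_eq]
  rw [hL]
  ring

lemma min_iff_foc (i : Fin N) (θi : Θ i) (hS : (S i θi).IsSymm)
    (hbelsum : ∑ θ : ∀ j, Θ j, bel i θi θ = 1)
    (hbelsupp : ∀ θ, bel i θi θ ≠ 0 → θ i = θi)
    (hPD : (F i i θi + (B i θi)ᵀ * S i θi * B i θi).PosDef)
    (u : ∀ j : Fin N, Θ j → Fin (m j) → ℝ) :
    (∀ v, oneCost A B S F Nv bel x i θi u ≤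
      oneCost A B S F Nv bel x i θi
        (Function.update u i (Function.update (u i) θi v))) ↔
    FOC A B S F Nv bel x u i θi := by
  have hself : Function.update u i (Function.update (u i) θi (u i θi)) = u := by
    rw [Function.update_eq_self, Function.update_eq_self]
  have hexp := cost_expand A B S F Nv bel x i θi hS hbelsum hbelsupp u
  have hcu : oneCost A B S F Nv bel x i θi u
      = u i θi ⬝ᵥ ((F i i θi + (B i θi)ᵀ * S i θi * B i θi) *ᵥ u i θi) +
        ((B i θi)ᵀ *ᵥ Nv i θi +
          (2:ℝ) • ((B i θi)ᵀ *ᵥ (S i θi *ᵥ abarV A B bel x u i θi))) ⬝ᵥ u i θi +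
        ∑ θ : ∀ j, Θ j, bel i θi θ *
          ((∑ j ∈ Finset.univ.erase i, u j (θ j) ⬝ᵥ (F i j θi *ᵥ u j (θ j))) +
            Nv i θi ⬝ᵥ aTh A B x u i θ +
            aTh A B x u i θ ⬝ᵥ (S i θi *ᵥ aTh A B x u i θ)) := by
    conv_lhs => rw [← hself]
    exact hexp (u i θi)
  have key : (∀ v, oneCost A B S F Nv bel x i θi u ≤
      oneCost A B S F Nv bel x i θi
        (Function.update u i (Function.update (u i) θi v))) ↔
      ((2:ℝ) • ((F i i θi + (B i θi)ᵀ * S i θi * B i θi) *ᵥ u i θi) +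
        ((B i θi)ᵀ *ᵥ Nv i θi +
          (2:ℝ) • ((B i θi)ᵀ *ᵥ (S i θi *ᵥ abarV A B bel x u i θi))) = 0) := by
    rw [← quad_min hPD _ (u i θi)]
    apply forall_congr'
    intro v
    rw [hcu, hexp v]
    exact add_le_add_iff_right _
  rw [key]
  have habar : (B i θi)ᵀ *ᵥ (S i θi *ᵥ abarV A B bel x u i θi)
      = (B i θi)ᵀ *ᵥ (S i θi *ᵥ ((∑ θ : ∀ j, Θ j, bel i θi θ • A θ) *ᵥ x)) +
        (B i θi)ᵀ *ᵥ (S i θi *ᵥ ∑ j ∈ Finset.univ.erase i, ∑ θ : ∀ j', Θ j',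
          bel i θi θ • (B j (θ j) *ᵥ u j (θ j))) := by
    unfold abarV
    rw [Matrix.mulVec_add, Matrix.mulVec_add]
  unfold FOC
  constructor
  · intro h
    funext k
    have h1 := congrFun h k
    have h2 := congrFun habar k
    simp only [Pi.add_apply, Pi.smul_apply, Pi.neg_apply, Pi.zero_apply, smul_eq_mul] at h1 h2 ⊢
    linarith
  · intro h
    funext k
    have h1 := congrFun h k
    have h2 := congrFun habar k
    simp only [Pi.add_apply, Pi.smul_apply, Pi.neg_apply, Pi.zero_apply, smul_eq_mul] at h1 h2 ⊢
    linarith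

lemma bne_iff_foc
    (hbelsum : ∀ i θi, ∑ θ : ∀ j, Θ j, bel i θi θ = 1)
    (hbelsupp : ∀ i θi θ, bel i θi θ ≠ 0 → θ i = θi)
    (hSsymm : ∀ i θi, (S i θi).IsSymm)
    (hPD : ∀ i θi, (F i i θi + (B i θi)ᵀ * S i θi * B i θi).PosDef)
    (u : ∀ j : Fin N, Θ j → Fin (m j) → ℝ) :
    IsBNE A B S F Nv bel x u ↔ ∀ i θi, FOC A B S F Nv bel x u i θi := by
  constructor
  · intro h i θi
    exact (min_iff_foc A B S F Nv bel x i θi (hSsymm i θi) (hbelsum i θi)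
      (hbelsupp i θi) (hPD i θi) u).mp (h i θi)
  · intro h i θi v
    exact (min_iff_foc A B S F Nv bel x i θi (hSsymm i θi) (hbelsum i θi)
      (hbelsupp i θi) (hPD i θi) u).mpr (h i θi) v

lemma W0_diag (i : Fin N) (θi : Θ i) (k : Fin (m i)) (θj : Θ i) (l : Fin (m i)) :
    W0mat B S F bel ⟨i, (θi, k)⟩ ⟨i, (θj, l)⟩
      = if θi = θj then (F i i θj + (B i θj)ᵀ * S i θj * B i θj) k l else 0 := by
  show dite _ _ _ = _
  rw [dif_pos rfl]
  rfl

lemma W0_off (i : Fin N) (θi : Θ i) (k : Fin (m i)) (j : Fin N) (hj : j ≠ i)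
    (θj : Θ j) (l : Fin (m j)) :
    W0mat B S F bel ⟨i, (θi, k)⟩ ⟨j, (θj, l)⟩
      = (∑ θ : ∀ j', Θ j', if θ j = θj then bel i θi θ else 0) *
          (((B i θi)ᵀ * S i θi * B j θj) k l) := by
  show dite _ _ _ = _
  rw [dif_neg (Ne.symm hj)]

lemma W0_row (u : ∀ j : Fin N, Θ j → Fin (m j) → ℝ) (i : Fin N) (θi : Θ i)
    (k : Fin (m i)) :
    (W0mat B S F bel *ᵥ stack u) ⟨i, (θi, k)⟩
      = ((F i i θi + (B i θi)ᵀ * S i θi * B i θi) *ᵥ u i θi) k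
        + ((B i θi)ᵀ *ᵥ (S i θi *ᵥ ∑ j ∈ Finset.univ.erase i, ∑ θ : ∀ j', Θ j',
            bel i θi θ • (B j (θ j) *ᵥ u j (θ j)))) k := by
  have hrow : (W0mat B S F bel *ᵥ stack u) ⟨i, (θi, k)⟩
      = ∑ q : StackIdx N m Θ, W0mat B S F bel ⟨i, (θi, k)⟩ q * stack u q := rfl
  rw [hrow, ← Finset.univ_sigma_univ, Finset.sum_sigma]
  rw [← Finset.add_sum_erase _ _ (Finset.mem_univ i)]
  congr 1
  · -- diagonal block
    have : ∀ t : Θ i × Fin (m i),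
        W0mat B S F bel ⟨i, (θi, k)⟩ ⟨i, t⟩ * stack u ⟨i, t⟩
          = if θi = t.1 then
              (F i i t.1 + (B i t.1)ᵀ * S i t.1 * B i t.1) k t.2 * u i t.1 t.2
            else 0 := by
      intro t
      rw [show (⟨i, t⟩ : StackIdx N m Θ) = ⟨i, (t.1, t.2)⟩ from rfl, W0_diag]
      unfold stack
      split <;> simp
    rw [Finset.sum_congr rfl fun t _ => this t, Fintype.sum_prod_type]
    dsimp only
    have h2 : ∀ θj : Θ i, (∑ l : Fin (m i),
        if θi = θj then (F i i θj + (B i θj)ᵀ * S i θj * B i θj) k l * u i θj l else 0)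
        = if θi = θj then
            ∑ l : Fin (m i), (F i i θj + (B i θj)ᵀ * S i θj * B i θj) k l * u i θj l
          else 0 := by
      intro θj; split <;> simp
    rw [Finset.sum_congr rfl fun θj _ => h2 θj, Finset.sum_ite_eq]
    simp [Matrix.mulVec, dotProduct]
  · -- off-diagonal blocks
    rw [mulVec_sum', mulVec_sum', Finset.sum_apply]
    refine Finset.sum_congr rfl fun j hj => ?_
    have hji : j ≠ i := Finset.ne_of_mem_erase hj
    have hW : ∀ t : Θ j × Fin (m j),
        W0mat B S F bel ⟨i, (θi, k)⟩ ⟨j, t⟩ * stack u ⟨j, t⟩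
        = (∑ θ : ∀ j', Θ j', if θ j = t.1 then bel i θi θ else 0) *
            (((B i θi)ᵀ * S i θi * B j t.1) k t.2 * u j t.1 t.2) := by
      intro t
      rw [show (⟨j, t⟩ : StackIdx N m Θ) = ⟨j, (t.1, t.2)⟩ from rfl,
        W0_off B S F bel i θi k j hji]
      unfold stack
      ring
    rw [Finset.sum_congr rfl fun t _ => hW t, Fintype.sum_prod_type]
    dsimp only
    rw [mulVec_sum', mulVec_sum', Finset.sum_apply]
    have hR : ∀ θ : ∀ j', Θ j',
        ((B i θi)ᵀ *ᵥ (S i θi *ᵥ (bel i θi θ • (B j (θ j) *ᵥ u j (θ j))))) k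
        = bel i θi θ * ((((B i θi)ᵀ * S i θi * B j (θ j)) *ᵥ u j (θ j)) k) := by
      intro θ
      rw [Matrix.mulVec_smul, Matrix.mulVec_smul, Matrix.mulVec_mulVec,
        Matrix.mulVec_mulVec]
      simp
    rw [Finset.sum_congr rfl fun θ _ => hR θ]
    calc ∑ θj : Θ j, ∑ l, (∑ θ : ∀ j', Θ j', if θ j = θj then bel i θi θ else 0) *
            (((B i θi)ᵀ * S i θi * B j θj) k l * u j θj l)
        = ∑ θj : Θ j, ∑ θ : ∀ j', Θ j', (if θ j = θj then
            bel i θi θ * ((((B i θi)ᵀ * S i θi * B j θj) *ᵥ u j θj) k) else 0) := by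
          refine Finset.sum_congr rfl fun θj _ => ?_
          have hm : ((((B i θi)ᵀ * S i θi * B j θj) *ᵥ u j θj) k)
              = ∑ l, ((B i θi)ᵀ * S i θi * B j θj) k l * u j θj l := rfl
          rw [← Finset.mul_sum, ← hm, Finset.sum_mul]
          refine Finset.sum_congr rfl fun θ _ => ?_
          split <;> simp
      _ = ∑ θ : ∀ j', Θ j', ∑ θj : Θ j, (if θ j = θj then
            bel i θi θ * ((((B i θi)ᵀ * S i θi * B j (θ j)) *ᵥ u j (θ j)) k) else 0) := by
          rw [Finset.sum_comm]
          refine Finset.sum_congr rfl fun θ _ => Finset.sum_congr rfl fun θj _ => ?_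
          by_cases h : θ j = θj
          · rw [if_pos h, if_pos h, h]
          · rw [if_neg h, if_neg h]
      _ = ∑ θ : ∀ j', Θ j', bel i θi θ *
            ((((B i θi)ᵀ * S i θi * B j (θ j)) *ᵥ u j (θ j)) k) := by
          refine Finset.sum_congr rfl fun θ _ => ?_
          rw [Finset.sum_ite_eq]
          simp

lemma W1_apply (i : Fin N) (θi : Θ i) (k : Fin (m i)) :
    (W1mat A B S bel *ᵥ x) ⟨i, (θi, k)⟩
      = ((B i θi)ᵀ *ᵥ (S i θi *ᵥ ((∑ θ : ∀ j, Θ j, bel i θi θ • A θ) *ᵥ x))) k := by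
  have h0 : (W1mat A B S bel *ᵥ x) ⟨i, (θi, k)⟩
      = (((B i θi)ᵀ * S i θi * (∑ θ : ∀ j, Θ j, bel i θi θ • A θ)) *ᵥ x) k := rfl
  rw [h0, ← Matrix.mulVec_mulVec, ← Matrix.mulVec_mulVec]

lemma foc_iff_system (u : ∀ j : Fin N, Θ j → Fin (m j) → ℝ) :
    (∀ i θi, FOC A B S F Nv bel x u i θi) ↔
      W0mat B S F bel *ᵥ stack u = -(W1mat A B S bel *ᵥ x + W2vec B Nv) := by
  have hW2 : ∀ (i : Fin N) (θi : Θ i) (k : Fin (m i)),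
      W2vec B Nv (⟨i, (θi, k)⟩ : StackIdx N m Θ)
        = (1 / 2) * (((B i θi)ᵀ *ᵥ Nv i θi) k) := fun _ _ _ => rfl
  constructor
  · intro h
    funext p
    obtain ⟨i, θi, k⟩ := p
    have hf := congrFun (h i θi) k
    rw [W0_row, Pi.neg_apply, Pi.add_apply, W1_apply, hW2]
    simp only [Pi.neg_apply, Pi.add_apply, Pi.smul_apply, smul_eq_mul] at hf
    linarith
  · intro h i θi
    have hFOC : ∀ k, -((F i i θi + (B i θi)ᵀ * S i θi * B i θi) *ᵥ u i θi) k
        = ((B i θi)ᵀ *ᵥ (S i θi *ᵥ ((∑ θ : ∀ j, Θ j, bel i θi θ • A θ) *ᵥ x))) k +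
          (1 / 2 : ℝ) * (((B i θi)ᵀ *ᵥ Nv i θi) k) +
          ((B i θi)ᵀ *ᵥ (S i θi *ᵥ
            ∑ j ∈ Finset.univ.erase i, ∑ θ : ∀ j', Θ j',
              bel i θi θ • (B j (θ j) *ᵥ u j (θ j)))) k := by
      intro k
      have hp := congrFun h ⟨i, (θi, k)⟩
      rw [W0_row, Pi.neg_apply, Pi.add_apply, W1_apply, hW2] at hp
      linarith
    funext k
    have := hFOC k
    simp only [Pi.neg_apply, Pi.add_apply, Pi.smul_apply, smul_eq_mul] at this ⊢
    linarith

end Aux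


/-- One-stage Bayesian linear-quadratic game: under positive definiteness of all
`R_i(θ_i)`, a profile is a Bayesian Nash equilibrium iff the first-order
conditions hold, iff the stacked action vector solves `W⁰ 𝐮 = −(W¹ x + W²)`;
and if moreover `W⁰` is nonsingular, the equilibrium exists, is unique, and is
affine in the state: `𝐮 = (−W⁰)⁻¹ (W¹ x + W²)`. -/
theorem stmt_12 {N n : ℕ} {m : Fin N → ℕ} {Θ : Fin N → Type*}
    [∀ i, Fintype (Θ i)] [∀ i, DecidableEq (Θ i)]
    (A : (∀ j, Θ j) → Matrix (Fin n) (Fin n) ℝ)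
    (B : ∀ j : Fin N, Θ j → Matrix (Fin n) (Fin (m j)) ℝ)
    (S : ∀ i : Fin N, Θ i → Matrix (Fin n) (Fin n) ℝ)
    (F : ∀ i j : Fin N, Θ i → Matrix (Fin (m j)) (Fin (m j)) ℝ)
    (Nv : ∀ i : Fin N, Θ i → Fin n → ℝ)
    (bel : ∀ i : Fin N, Θ i → (∀ j, Θ j) → ℝ)
    (hbelpos : ∀ i θi θ, 0 ≤ bel i θi θ)
    (hbelsum : ∀ i θi, ∑ θ : ∀ j, Θ j, bel i θi θ = 1)
    (hbelsupp : ∀ i θi θ, bel i θi θ ≠ 0 → θ i = θi)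
    (hSsymm : ∀ i θi, (S i θi).IsSymm)
    (hFsymm : ∀ i j θi, (F i j θi).IsSymm)
    (x : Fin n → ℝ)
    (hPD : ∀ i θi, (F i i θi + (B i θi)ᵀ * S i θi * B i θi).PosDef) :
    (∀ u, IsBNE A B S F Nv bel x u ↔ ∀ i θi, FOC A B S F Nv bel x u i θi) ∧
    (∀ u, IsBNE A B S F Nv bel x u ↔
      W0mat B S F bel *ᵥ stack u = -(W1mat A B S bel *ᵥ x + W2vec B Nv)) ∧
    (IsUnit (W0mat B S F bel (m := m)).det →
      (∃! u : ∀ j : Fin N, Θ j → Fin (m j) → ℝ, IsBNE A B S F Nv bel x u) ∧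
      (∀ u, IsBNE A B S F Nv bel x u →
        stack u = (-(W0mat B S F bel))⁻¹ *ᵥ (W1mat A B S bel *ᵥ x + W2vec B Nv))) := by
  have hBF : ∀ u, IsBNE A B S F Nv bel x u ↔ ∀ i θi, FOC A B S F Nv bel x u i θi :=
    fun u => bne_iff_foc A B S F Nv bel x hbelsum hbelsupp hSsymm hPD u
  have hBS : ∀ u, IsBNE A B S F Nv bel x u ↔
      W0mat B S F bel *ᵥ stack u = -(W1mat A B S bel *ᵥ x + W2vec B Nv) :=
    fun u => (hBF u).trans (foc_iff_system A B S F Nv bel x u)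
  refine ⟨hBF, hBS, ?_⟩
  intro hdet
  have hform : ∀ u, IsBNE A B S F Nv bel x u → stack u =
      (W0mat B S F bel)⁻¹ *ᵥ -(W1mat A B S bel *ᵥ x + W2vec B Nv) := by
    intro u hu
    have h1 := (hBS u).mp hu
    have h2 : stack u = (W0mat B S F bel)⁻¹ *ᵥ (W0mat B S F bel *ᵥ stack u) := by
      rw [Matrix.mulVec_mulVec, Matrix.nonsing_inv_mul _ hdet, Matrix.one_mulVec]
    rw [h2, h1]
  constructor
  · refine ⟨fun j θj l => ((W0mat B S F bel)⁻¹ *ᵥ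
      -(W1mat A B S bel *ᵥ x + W2vec B Nv)) ⟨j, (θj, l)⟩, ?_, ?_⟩
    · apply (hBS _).mpr
      have hstk : stack (fun j θj l => ((W0mat B S F bel)⁻¹ *ᵥ
          -(W1mat A B S bel *ᵥ x + W2vec B Nv)) ⟨j, (θj, l)⟩ :
            ∀ j : Fin N, Θ j → Fin (m j) → ℝ)
          = (W0mat B S F bel)⁻¹ *ᵥ -(W1mat A B S bel *ᵥ x + W2vec B Nv) := rfl
      rw [hstk, Matrix.mulVec_mulVec, Matrix.mul_nonsing_inv _ hdet, Matrix.one_mulVec]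
    · intro u' h'
      have := hform u' h'
      funext j θj l
      exact congrFun this ⟨j, (θj, l)⟩
  · intro u hu
    have h1 := (hBS u).mp hu
    have h2 : (-(W0mat B S F bel)) *ᵥ stack u
        = W1mat A B S bel *ᵥ x + W2vec B Nv := by
      rw [Matrix.neg_mulVec, h1, neg_neg]
    have hdet2 : IsUnit (-(W0mat B S F bel (m := m))).det := by
      rw [Matrix.det_neg]
      exact (isUnit_one.neg.pow _).mul hdet
    have h3 : stack u = (-(W0mat B S F bel))⁻¹ *ᵥ ((-(W0mat B S F bel)) *ᵥ stack u) := by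
      rw [Matrix.mulVec_mulVec, Matrix.nonsing_inv_mul _ hdet2, Matrix.one_mulVec]
    rw [h3, h2]
end
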